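/- arXiv:1309.3648 — 2 statements merged into one kernel-verified Lean document; each statement's English description precedes it below -/
import Mathlib

section
/- For every real numbers a, b ≥ 0 and integer n ≥ 2, one has |a^n - b^n| ≤ (n/(n-1)) · (a + b) · |a^{n-1} - b^{n-1}|. -/
/-! The factor `n / (n - 1) ≥ 1` is slack: already `|aⁿ - bⁿ| ≤ (a + b) |aⁿ⁻¹ - bⁿ⁻¹|`,
since for `b ≤ a` the difference of the two sides is `a b (aⁿ⁻² - bⁿ⁻²) ≥ 0`. -/

namespace PortedStatement

section OrderedRing

variable {R : Type*} [CommRing R] [LinearOrder R] [IsStrictOrderedRing R]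

theorem pow_sub_pow_le_add_mul_pow_sub_pow {a b : R} (hb : 0 ≤ b) (hab : b ≤ a) (k : ℕ) :
    a ^ (k + 2) - b ^ (k + 2) ≤ (a + b) * (a ^ (k + 1) - b ^ (k + 1)) := by
  have hgap : (a + b) * (a ^ (k + 1) - b ^ (k + 1)) - (a ^ (k + 2) - b ^ (k + 2)) =
      a * b * (a ^ k - b ^ k) := by ring
  have hgap_nonneg : 0 ≤ a * b * (a ^ k - b ^ k) :=
    mul_nonneg (mul_nonneg (hb.trans hab) hb) (sub_nonneg.2 (pow_le_pow_left₀ hb hab k))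
  linarith

theorem abs_pow_sub_pow_le_add_mul_abs {a b : R} (ha : 0 ≤ a) (hb : 0 ≤ b) (k : ℕ) :
    |a ^ (k + 2) - b ^ (k + 2)| ≤ (a + b) * |a ^ (k + 1) - b ^ (k + 1)| := by
  wlog hab : b ≤ a generalizing a b
  · simpa only [abs_sub_comm, add_comm] using this hb ha (le_of_not_ge hab)
  rw [abs_of_nonneg (sub_nonneg.2 (pow_le_pow_left₀ hb hab _)),
    abs_of_nonneg (sub_nonneg.2 (pow_le_pow_left₀ hb hab _))]
  exact pow_sub_pow_le_add_mul_pow_sub_pow hb hab k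

end OrderedRing

theorem one_le_natCast_div_natCast_sub_one {n : ℕ} (hn : 2 ≤ n) : 1 ≤ (n : ℝ) / ((n : ℝ) - 1) := by
  have hn' : (2 : ℝ) ≤ n := by exact_mod_cast hn
  rw [one_le_div₀ (by linarith)]
  linarith

theorem abs_pow_sub_pow_le (a b : ℝ) (ha : 0 ≤ a) (hb : 0 ≤ b) (n : ℕ) (hn : 2 ≤ n) :
    |a ^ n - b ^ n| ≤ ((n : ℝ) / ((n : ℝ) - 1)) * (a + b) * |a ^ (n - 1) - b ^ (n - 1)| := by
  obtain ⟨k, rfl⟩ : ∃ k, n = k + 2 := ⟨n - 2, by omega⟩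
  calc |a ^ (k + 2) - b ^ (k + 2)| ≤ (a + b) * |a ^ (k + 1) - b ^ (k + 1)| :=
        abs_pow_sub_pow_le_add_mul_abs ha hb k
    _ ≤ ((k + 2 : ℕ) / ((k + 2 : ℕ) - 1 : ℝ)) * ((a + b) * |a ^ (k + 1) - b ^ (k + 1)|) :=
        le_mul_of_one_le_left (by positivity) (one_le_natCast_div_natCast_sub_one hn)
    _ = _ := by rw [mul_assoc]; rfl
end PortedStatement
end

section
/- Let c : 𝒞 → ℝ be a continuous, translation-invariant, monotone set function on the class 𝒞 of nonempty compact convex subsets of ℝ^n satisfying c(K) ≤ diam(K)/2 for all K and c(B) = r for every closed ball B of radius r. Suppose μ is a finite Borel measure on S^{n−1} with P_μ(ξ) := ∫ max{0, ξ·η} dμ(η) bounded below by a positive constant and satisfying P_μ(ξ) = P_μ(−ξ) for all ξ. Then the infimum M = inf{∫ h_K dμ : K ∈ 𝒞, c(K) ≥ 1} is strictly positive. -/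
open MeasureTheory

/-- Nonempty compact convex subsets of `ℝⁿ`. -/
def IsCC {n : ℕ} (K : Set (EuclideanSpace ℝ (Fin n))) : Prop :=
  K.Nonempty ∧ IsCompact K ∧ Convex ℝ K

/-- `P_μ(ξ) = ∫ max{0, ξ·η} dμ(η)` for a measure `μ` on the unit sphere. -/
noncomputable def Pmu {n : ℕ}
    (μ : Measure (Metric.sphere (0 : EuclideanSpace ℝ (Fin n)) 1))
    (ξ : EuclideanSpace ℝ (Fin n)) : ℝ :=
  ∫ η, max 0 (inner ℝ ξ (η : EuclideanSpace ℝ (Fin n)) : ℝ) ∂μ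

/-!
For `x, y ∈ K` the support function satisfies
`h_K(ξ) ≥ max(ξ·x, ξ·y) = ξ·x + max(0, ξ·(y - x))`. Integrating, the linear term
`∫ ξ·x dμ = P_μ(x) - P_μ(-x)` vanishes by evenness, and what remains is `P_μ(y - x) ≥ m |y - x|`.
Hence `∫ h_K dμ ≥ m · diam K ≥ 2m` whenever `c(K) ≥ 1`.
-/

open Metric

theorem Continuous.integrable_of_compactSpace {X : Type*} [TopologicalSpace X] [CompactSpace X]
    [MeasurableSpace X] [OpensMeasurableSpace X] {μ : Measure X} [IsFiniteMeasure μ]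
    {f : X → ℝ} (hf : Continuous f) : Integrable f μ :=
  hf.integrable_of_hasCompactSupport (.of_compactSpace f)

section SupportFunction

variable {E : Type*} [NormedAddCommGroup E] [InnerProductSpace ℝ E]

noncomputable def supportFunction (K : Set E) (ξ : E) : ℝ :=
  sSup ((fun y => inner ℝ ξ y) '' K)

theorem inner_le_supportFunction {K : Set E} (hK : IsCompact K) (ξ : E) {x : E} (hx : x ∈ K) :
    inner ℝ ξ x ≤ supportFunction K ξ :=
  le_csSup (hK.image (continuous_const.inner continuous_id)).bddAbove ⟨x, hx, rfl⟩

theorem continuous_supportFunction {K : Set E} (hK : IsCompact K) :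
    Continuous (supportFunction K) :=
  hK.continuous_sSup (f := fun ξ y => inner ℝ ξ y) continuous_inner

end SupportFunction

section Pmu

variable {n : ℕ} (μ : Measure (sphere (0 : EuclideanSpace ℝ (Fin n)) 1))

theorem Pmu_smul {a : ℝ} (ha : 0 ≤ a) (v : EuclideanSpace ℝ (Fin n)) :
    Pmu μ (a • v) = a * Pmu μ v := by
  simp only [Pmu, real_inner_smul_left]
  rw [← integral_const_mul]
  congr with η
  rw [mul_max_of_nonneg _ _ ha, mul_zero]

theorem Pmu_eq_norm_mul_Pmu_normalize (v : EuclideanSpace ℝ (Fin n)) :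
    Pmu μ v = ‖v‖ * Pmu μ (‖v‖⁻¹ • v) := by
  rcases eq_or_ne v 0 with rfl | hv
  · simp [Pmu]
  · rw [← Pmu_smul μ (norm_nonneg v), smul_inv_smul₀ (norm_ne_zero_iff.mpr hv)]

theorem Pmu_neg
    (heven : ∀ ξ : EuclideanSpace ℝ (Fin n), ‖ξ‖ = 1 → Pmu μ ξ = Pmu μ (-ξ))
    (v : EuclideanSpace ℝ (Fin n)) : Pmu μ (-v) = Pmu μ v := by
  rcases eq_or_ne v 0 with rfl | hv
  · rw [neg_zero]
  · rw [Pmu_eq_norm_mul_Pmu_normalize μ v, Pmu_eq_norm_mul_Pmu_normalize μ (-v), norm_neg,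
      smul_neg]
    exact congrArg _ (heven _ (norm_smul_inv_norm (𝕜 := ℝ) hv)).symm

theorem mul_norm_le_Pmu {m : ℝ}
    (hlow : ∀ ξ : EuclideanSpace ℝ (Fin n), ‖ξ‖ = 1 → m ≤ Pmu μ ξ)
    (v : EuclideanSpace ℝ (Fin n)) : m * ‖v‖ ≤ Pmu μ v := by
  rcases eq_or_ne v 0 with rfl | hv
  · simp [Pmu]
  · rw [Pmu_eq_norm_mul_Pmu_normalize μ v, mul_comm]
    exact mul_le_mul_of_nonneg_left (hlow _ (norm_smul_inv_norm (𝕜 := ℝ) hv)) (norm_nonneg v)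

variable [IsFiniteMeasure μ]

theorem integrable_max_zero_inner (v : EuclideanSpace ℝ (Fin n)) :
    Integrable (fun η : sphere (0 : EuclideanSpace ℝ (Fin n)) 1 =>
      max 0 (inner ℝ v (η : EuclideanSpace ℝ (Fin n)))) μ :=
  Continuous.integrable_of_compactSpace (by fun_prop)

theorem integral_inner_eq_Pmu_sub (v : EuclideanSpace ℝ (Fin n)) :
    ∫ η, inner ℝ v (η : EuclideanSpace ℝ (Fin n)) ∂μ = Pmu μ v - Pmu μ (-v) := by
  rw [Pmu, Pmu,
    ← integral_sub (integrable_max_zero_inner μ v) (integrable_max_zero_inner μ (-v))]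
  congr with η
  rw [inner_neg_left, max_comm 0, max_comm 0, max_zero_sub_max_neg_zero_eq_self]

theorem mul_dist_le_integral_supportFunction {m : ℝ}
    (hlow : ∀ ξ : EuclideanSpace ℝ (Fin n), ‖ξ‖ = 1 → m ≤ Pmu μ ξ)
    (heven : ∀ ξ : EuclideanSpace ℝ (Fin n), ‖ξ‖ = 1 → Pmu μ ξ = Pmu μ (-ξ))
    {K : Set (EuclideanSpace ℝ (Fin n))} (hK : IsCompact K) {x y : EuclideanSpace ℝ (Fin n)}
    (hx : x ∈ K) (hy : y ∈ K) :
    m * dist x y ≤ ∫ ξ, supportFunction K (ξ : EuclideanSpace ℝ (Fin n)) ∂μ := by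
  have hpoint : ∀ ξ : sphere (0 : EuclideanSpace ℝ (Fin n)) 1,
      inner ℝ x (ξ : EuclideanSpace ℝ (Fin n))
          + max 0 (inner ℝ (y - x) (ξ : EuclideanSpace ℝ (Fin n))) ≤ supportFunction K ξ := by
    intro ξ
    have hxK := inner_le_supportFunction hK ξ hx
    have hyK := inner_le_supportFunction hK ξ hy
    rw [real_inner_comm] at hxK hyK
    rw [inner_sub_left, ← le_sub_iff_add_le']
    exact max_le (by linarith) (by linarith)
  have hinner : Integrable (fun η : sphere (0 : EuclideanSpace ℝ (Fin n)) 1 =>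
      inner ℝ x (η : EuclideanSpace ℝ (Fin n))) μ :=
    Continuous.integrable_of_compactSpace (by fun_prop)
  calc m * dist x y = m * ‖y - x‖ := by rw [dist_comm, dist_eq_norm]
    _ ≤ Pmu μ (y - x) := mul_norm_le_Pmu μ hlow _
    _ = ∫ ξ, inner ℝ x (ξ : EuclideanSpace ℝ (Fin n))
          + max 0 (inner ℝ (y - x) (ξ : EuclideanSpace ℝ (Fin n))) ∂μ := by
      rw [integral_add hinner (integrable_max_zero_inner μ _), integral_inner_eq_Pmu_sub,
        Pmu_neg μ heven, sub_self, zero_add, Pmu]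
    _ ≤ _ := integral_mono (hinner.add (integrable_max_zero_inner μ _))
      ((continuous_supportFunction hK).comp continuous_subtype_val).integrable_of_compactSpace
      hpoint

theorem mul_diam_le_integral_supportFunction {m : ℝ} (hm : 0 < m)
    (hlow : ∀ ξ : EuclideanSpace ℝ (Fin n), ‖ξ‖ = 1 → m ≤ Pmu μ ξ)
    (heven : ∀ ξ : EuclideanSpace ℝ (Fin n), ‖ξ‖ = 1 → Pmu μ ξ = Pmu μ (-ξ))
    {K : Set (EuclideanSpace ℝ (Fin n))} (hK : IsCompact K) (hne : K.Nonempty) :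
    m * diam K ≤ ∫ ξ, supportFunction K (ξ : EuclideanSpace ℝ (Fin n)) ∂μ := by
  have hdist : ∀ x ∈ K, ∀ y ∈ K,
      dist x y ≤ (∫ ξ, supportFunction K (ξ : EuclideanSpace ℝ (Fin n)) ∂μ) / m :=
    fun _ hx _ hy =>
      (le_div_iff₀' hm).mpr (mul_dist_le_integral_supportFunction μ hlow heven hK hx hy)
  obtain ⟨x, hx⟩ := hne
  rw [← le_div_iff₀' hm]
  exact diam_le_of_forall_dist_le (dist_nonneg.trans (hdist x hx x hx)) hdist

end Pmu

theorem minkowski_infimum_positive_general {n : ℕ}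
    (c : Set (EuclideanSpace ℝ (Fin n)) → ℝ)
    (hdiam : ∀ K, IsCC K → c K ≤ Metric.diam K / 2)
    (hball : ∀ (x : EuclideanSpace ℝ (Fin n)) (r : ℝ), 0 ≤ r →
      c (Metric.closedBall x r) = r)
    (μ : Measure (Metric.sphere (0 : EuclideanSpace ℝ (Fin n)) 1)) [IsFiniteMeasure μ]
    (m : ℝ) (hm : 0 < m)
    (hlow : ∀ ξ : EuclideanSpace ℝ (Fin n), ‖ξ‖ = 1 → m ≤ Pmu μ ξ)
    (heven : ∀ ξ : EuclideanSpace ℝ (Fin n), ‖ξ‖ = 1 → Pmu μ ξ = Pmu μ (-ξ)) :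
    0 < sInf { r : ℝ | ∃ K, IsCC K ∧ 1 ≤ c K ∧
      r = ∫ ξ, sSup ((fun y => (inner ℝ (ξ : EuclideanSpace ℝ (Fin n)) y : ℝ)) '' K) ∂μ } := by
  have hball_cc : IsCC (closedBall (0 : EuclideanSpace ℝ (Fin n)) 1) :=
    ⟨nonempty_closedBall.mpr zero_le_one, isCompact_closedBall _ _, convex_closedBall _ _⟩
  refine (mul_pos two_pos hm).trans_le
    (le_csInf ⟨_, _, hball_cc, (hball 0 1 zero_le_one).ge, rfl⟩ ?_)
  rintro _ ⟨K, hKcc, hcK, rfl⟩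
  have hdiamK : 2 ≤ diam K := by linarith [hdiam K hKcc]
  obtain ⟨hne, hK, -⟩ := hKcc
  calc 2 * m ≤ m * diam K := by nlinarith
    _ ≤ _ := mul_diam_le_integral_supportFunction μ hm hlow heven hK hne

theorem minkowski_infimum_positive {n : ℕ}
    (c : Set (EuclideanSpace ℝ (Fin n)) → ℝ)
    (hcont : ∀ K, IsCC K → ∀ ε > (0 : ℝ), ∃ δ > (0 : ℝ), ∀ L, IsCC L →
      Metric.hausdorffDist K L < δ → |c L - c K| < ε)
    (htrans : ∀ (K : Set (EuclideanSpace ℝ (Fin n))) (x : EuclideanSpace ℝ (Fin n)),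
      c ((fun y => y + x) '' K) = c K)
    (hmono : ∀ K L, IsCC K → IsCC L → K ⊆ L → c K ≤ c L)
    (hdiam : ∀ K, IsCC K → c K ≤ Metric.diam K / 2)
    (hball : ∀ (x : EuclideanSpace ℝ (Fin n)) (r : ℝ), 0 ≤ r →
      c (Metric.closedBall x r) = r)
    (μ : Measure (Metric.sphere (0 : EuclideanSpace ℝ (Fin n)) 1)) [IsFiniteMeasure μ]
    (m : ℝ) (hm : 0 < m)
    (hlow : ∀ ξ : EuclideanSpace ℝ (Fin n), ‖ξ‖ = 1 → m ≤ Pmu μ ξ)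
    (heven : ∀ ξ : EuclideanSpace ℝ (Fin n), ‖ξ‖ = 1 → Pmu μ ξ = Pmu μ (-ξ)) :
    0 < sInf { r : ℝ | ∃ K, IsCC K ∧ 1 ≤ c K ∧
      r = ∫ ξ, sSup ((fun y => (inner ℝ (ξ : EuclideanSpace ℝ (Fin n)) y : ℝ)) '' K) ∂μ } :=
  minkowski_infimum_positive_general c hdiam hball μ m hm hlow heven
end
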